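/- arXiv:1809.02563 — 2 statements merged into one kernel-verified Lean document; each statement's English description precedes it below -/
import Mathlib

section
/- The lattice Z³ equipped with the quadratic form given by the matrix [[-2,1,0],[1,4,0],[0,0,4]] admits an isometric embedding into the K3 lattice L = (-E₈) ⊕ (-E₈) ⊕ U ⊕ U ⊕ U, where U is the hyperbolic plane [[0,1],[1,0]]. -/
open Matrix

/-- Gram matrix of the negative definite `E₈` lattice (the negative of the `E₈` Cartan
matrix). -/
def negE8 : Matrix (Fin 8) (Fin 8) ℤ := -CartanMatrix.E₈

/-- Gram matrix of the hyperbolic plane `U`. -/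
def hypU : Matrix (Fin 2) (Fin 2) ℤ := !![0, 1; 1, 0]

/-- The K3 lattice `L = (-E₈) ⊕ (-E₈) ⊕ U ⊕ U ⊕ U`. -/
abbrev K3Lattice : Type := (Fin 8 → ℤ) × (Fin 8 → ℤ) × (Fin 2 → ℤ) × (Fin 2 → ℤ) × (Fin 2 → ℤ)

/-- The symmetric bilinear form on the K3 lattice, the orthogonal direct sum of the
forms on the five summands. -/
def K3Form (v w : K3Lattice) : ℤ :=
  v.1 ⬝ᵥ (negE8 *ᵥ w.1) + v.2.1 ⬝ᵥ (negE8 *ᵥ w.2.1) + v.2.2.1 ⬝ᵥ (hypU *ᵥ w.2.2.1)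
    + v.2.2.2.1 ⬝ᵥ (hypU *ᵥ w.2.2.2.1) + v.2.2.2.2 ⬝ᵥ (hypU *ᵥ w.2.2.2.2)

/-- Gram matrix of the lattice `N₊ ⊕ N₋` in the basis `Π̃`, `-K₊`, `-(1/4)K₋`. -/
def NForm : Matrix (Fin 3) (Fin 3) ℤ := !![-2, 1, 0; 1, 4, 0; 0, 0, 4]

/-- The embedding map: `e₁ ↦ α₀`, `e₂ ↦ α₂ + B₁+C₁+B₂+C₂+B₃+C₃`, `e₃ ↦ B₁+C₁-B₂-C₂`. -/
def embMap : (Fin 3 → ℤ) →ₗ[ℤ] K3Lattice where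
  toFun v := (![v 0, 0, v 1, 0, 0, 0, 0, 0], 0,
      ![v 1 + v 2, v 1 + v 2], ![v 1 - v 2, v 1 - v 2], ![v 1, v 1])
  map_add' v w := by
    refine Prod.ext ?_ (Prod.ext ?_ (Prod.ext ?_ (Prod.ext ?_ ?_))) <;>
      funext i <;> fin_cases i <;> simp [Pi.add_apply] <;> ring
  map_smul' c v := by
    refine Prod.ext ?_ (Prod.ext ?_ (Prod.ext ?_ (Prod.ext ?_ ?_))) <;>
      funext i <;> fin_cases i <;> simp [Pi.smul_apply, smul_eq_mul] <;> ring

/-- The lattice `ℤ³` equipped with the quadratic form `[[-2,1,0],[1,4,0],[0,0,4]]` admits an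
isometric embedding into the K3 lattice `L = (-E₈) ⊕ (-E₈) ⊕ U ⊕ U ⊕ U`. -/
theorem stmt_2 :
    ∃ f : (Fin 3 → ℤ) →ₗ[ℤ] K3Lattice, Function.Injective f ∧
      ∀ v w : Fin 3 → ℤ, K3Form (f v) (f w) = v ⬝ᵥ (NForm *ᵥ w) := by
  refine ⟨embMap, ?_, ?_⟩
  · intro v w h
    have h1 := congrFun (congrArg Prod.fst h) 0
    have h2 := congrFun (congrArg Prod.fst h) 2
    have h3 := congrFun (congrArg (fun x => x.2.2.2.2) h) 0
    simp [embMap] at h1 h2 h3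
    have h4 := congrFun (congrArg (fun x => x.2.2.1) h) 0
    simp [embMap] at h4
    funext i
    fin_cases i
    · exact h1
    · exact h2
    · show v 2 = w 2; omega
  · intro v w
    simp only [embMap, K3Form, NForm, negE8, hypU, CartanMatrix.E₈, LinearMap.coe_mk,
      AddHom.coe_mk, dotProduct, mulVec, Fin.sum_univ_succ, Fin.sum_univ_zero]
    simp
    ring
end

section
/- Any solution y: (0,∞) → ℝ of the modified Bessel equation (r d/dr)² y − (r² + μ²) y = 0 with μ ≥ 0 that satisfies ∫₀^∞ |r^{-δ} y(r)|² dr/r < ∞ for some δ > −2 is identically zero. -/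
/-!
Under the substitution `r = exp (± t)` the equation becomes `u'' = (exp (± 2 t) + μ²) u`. If
`y (r₀) > 0`, follow `r → ∞` when `y' (r₀) ≥ 0` and `r → 0` when `y' (r₀) ≤ 0`: then `u` and `u'`
start nonnegative, stay so, and `u'' ≥ k² u` forces `u ≳ exp (k t)`. This gives `y ≳ r ^ δ` near
`∞` (any exponent is available there) or `y ≳ r ^ (-μ)` near `0`, and either bound makes
`∫ (r ^ (-δ) y) ^ 2 / r` diverge as soon as `μ + δ ≥ 0`. Negative values are handled by `-y`.
-/

open MeasureTheory Set Real

lemma monotoneOn_Ici_of_hasDerivAt_nonneg {F F' : ℝ → ℝ} {a : ℝ}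
    (hF : ∀ t ∈ Ici a, HasDerivAt F (F' t) t) (hF' : ∀ t ∈ Ici a, 0 ≤ F' t) :
    MonotoneOn F (Ici a) :=
  monotoneOn_of_hasDerivWithinAt_nonneg (convex_Ici a)
    (fun t ht => (hF t ht).continuousAt.continuousWithinAt)
    (fun t ht => (hF t (interior_subset ht)).hasDerivWithinAt)
    (fun t ht => hF' t (interior_subset ht))

lemma mul_exp_le_of_mul_le_deriv {F F' : ℝ → ℝ} {k a : ℝ}
    (hF : ∀ t ∈ Ici a, HasDerivAt F (F' t) t) (hF' : ∀ t ∈ Ici a, k * F t ≤ F' t) :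
    ∀ t ∈ Ici a, F a * exp (k * (t - a)) ≤ F t := by
  have hE : ∀ t, HasDerivAt (fun t => exp (-k * t)) (-k * exp (-k * t)) t := fun t => by
    simpa [mul_comm] using ((hasDerivAt_id t).const_mul (-k)).exp
  have hmono : MonotoneOn (fun t => exp (-k * t) * F t) (Ici a) := by
    refine monotoneOn_Ici_of_hasDerivAt_nonneg (fun t ht => (hE t).mul (hF t ht)) fun t ht => ?_
    nlinarith [exp_pos (-k * t), hF' t ht]
  intro t ht
  have key := mul_le_mul_of_nonneg_left (hmono self_mem_Ici ht ht) (exp_pos (k * t)).le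
  calc F a * exp (k * (t - a)) = exp (k * t) * (exp (-k * a) * F a) := by
        rw [show k * (t - a) = k * t + -k * a by ring, exp_add]; ring
    _ ≤ exp (k * t) * (exp (-k * t) * F t) := key
    _ = F t := by rw [← mul_assoc, ← exp_add]; simp

lemma pos_and_nonneg_of_hasDerivAt {u v g : ℝ → ℝ} {a : ℝ}
    (hu : ∀ t, HasDerivAt u (v t) t) (hv : ∀ t, HasDerivAt v (g t * u t) t)
    (hg : ∀ t ∈ Ici a, 0 ≤ g t) (hua : 0 < u a) (hva : 0 ≤ v a) :
    ∀ t ∈ Ici a, 0 < u t ∧ 0 ≤ v t := by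
  -- `(u v)' = v ^ 2 + g u ^ 2 ≥ 0`, so `(u ^ 2)' = 2 u v` stays nonnegative and `u` cannot vanish
  have huv : MonotoneOn (fun t => u t * v t) (Ici a) :=
    monotoneOn_Ici_of_hasDerivAt_nonneg (fun t _ => (hu t).mul (hv t))
      fun t ht => by nlinarith [hg t ht, sq_nonneg (u t), sq_nonneg (v t)]
  have hu2 : MonotoneOn (fun t => u t * u t) (Ici a) :=
    monotoneOn_Ici_of_hasDerivAt_nonneg (fun t _ => (hu t).mul (hu t))
      fun t ht => by nlinarith [huv self_mem_Ici ht ht, mul_nonneg hua.le hva]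
  have hu_ne : ∀ t ∈ Ici a, u t ≠ 0 := fun t ht h0 => by
    nlinarith [hu2 self_mem_Ici ht ht]
  have hu_pos : ∀ t ∈ Ici a, 0 < u t := by
    intro t ht
    by_contra! hneg
    obtain ⟨s, hs, hs0⟩ := intermediate_value_Icc' (mem_Ici.1 ht)
      (fun s _ => (hu s).continuousAt.continuousWithinAt) ⟨hneg, hua.le⟩
    exact hu_ne s hs.1 hs0
  have hv_mono : MonotoneOn v (Ici a) :=
    monotoneOn_Ici_of_hasDerivAt_nonneg (fun t _ => hv t)
      fun t ht => mul_nonneg (hg t ht) (hu_pos t ht).le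
  exact fun t ht => ⟨hu_pos t ht, hva.trans (hv_mono self_mem_Ici ht ht)⟩

lemma half_mul_exp_le_of_hasDerivAt {u v g : ℝ → ℝ} {k a : ℝ}
    (hu : ∀ t, HasDerivAt u (v t) t) (hv : ∀ t, HasDerivAt v (g t * u t) t)
    (hg : ∀ t ∈ Ici a, k ^ 2 ≤ g t) (hua : 0 < u a) (hva : 0 ≤ v a) :
    ∀ t ∈ Ici a, u a / 2 * exp (k * (t - a)) ≤ u t := by
  have hpos := pos_and_nonneg_of_hasDerivAt hu hv (fun t ht => (sq_nonneg k).trans (hg t ht))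
    hua hva
  -- `w = v + k u` satisfies `w' ≥ k w`, ...
  have hw := mul_exp_le_of_mul_le_deriv (F := fun t => v t + k * u t) (k := k) (a := a)
    (fun t _ => (hv t).add ((hu t).const_mul k))
    fun t ht => by nlinarith [hg t ht, (hpos t ht).1]
  have hE : ∀ t, HasDerivAt (fun t => u a / 2 * exp (k * (t - a)))
      (u a / 2 * (k * exp (k * (t - a)))) t := fun t => by
    simpa [mul_comm] using (((hasDerivAt_id t).sub_const a).const_mul k).exp.const_mul (u a / 2)
  -- ... hence `G = u - u a / 2 * exp (k * (t - a))` satisfies `G' ≥ -k G` and stays `≥ 0`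
  have hG := mul_exp_le_of_mul_le_deriv (F := fun t => u t - u a / 2 * exp (k * (t - a)))
    (k := -k) (a := a) (fun t _ => (hu t).sub (hE t))
    fun t ht => by nlinarith [hw t ht, exp_pos (k * (t - a))]
  intro t ht
  have := hG t ht
  simp only [sub_self, mul_zero, exp_zero] at this
  nlinarith [exp_pos (-k * (t - a))]

lemma sq_rpow_mul_rpow_div_self {r : ℝ} (hr : 0 < r) (C p δ : ℝ) :
    (r ^ (-δ) * (C * r ^ p)) ^ 2 / r = C ^ 2 * r ^ (2 * (p - δ) - 1) := by
  rw [rpow_sub_one hr.ne', two_mul, rpow_add hr, sub_eq_neg_add, rpow_add hr]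
  ring

lemma integrableOn_rpow_of_mul_rpow_le {S : Set ℝ} {C p δ : ℝ} {y : ℝ → ℝ}
    (hS : MeasurableSet S) (hS0 : S ⊆ Ioi 0) (hC : 0 < C) (hy : ∀ r ∈ S, C * r ^ p ≤ y r)
    (hint : IntegrableOn (fun r => (r ^ (-δ) * y r) ^ 2 / r) S) :
    IntegrableOn (fun r => r ^ (2 * (p - δ) - 1)) S := by
  refine Integrable.mono' (hint.div_const (C ^ 2))
    ((continuousOn_id.rpow_const fun r hr => Or.inl (hS0 hr).ne').aestronglyMeasurable hS)
    (ae_restrict_of_forall_mem hS fun r hr => ?_)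
  have hr0 : 0 < r := hS0 hr
  rw [norm_of_nonneg (rpow_nonneg hr0.le _), le_div_iff₀ (by positivity), mul_comm,
    ← sq_rpow_mul_rpow_div_self hr0]
  gcongr
  exact hy r hr

lemma exp_mul_log_sub {r : ℝ} (hr : 0 < r) (k a : ℝ) :
    exp (k * (log r - a)) = exp (-(k * a)) * r ^ k := by
  rw [rpow_def_of_pos hr, ← exp_add]
  ring_nf

structure IsModBesselSolution (μ : ℝ) (y y' y'' : ℝ → ℝ) : Prop where
  hasDerivAt : ∀ r > 0, HasDerivAt y (y' r) r
  hasDerivAt_deriv : ∀ r > 0, HasDerivAt y' (y'' r) r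
  ode : ∀ r > 0, r ^ 2 * y'' r + r * y' r - (r ^ 2 + μ ^ 2) * y r = 0

namespace IsModBesselSolution

variable {μ : ℝ} {y y' y'' : ℝ → ℝ}

theorem neg (h : IsModBesselSolution μ y y' y'') : IsModBesselSolution μ (-y) (-y') (-y'') where
  hasDerivAt r hr := (h.hasDerivAt r hr).neg
  hasDerivAt_deriv r hr := (h.hasDerivAt_deriv r hr).neg
  ode r hr := by
    show r ^ 2 * -y'' r + r * -y' r - (r ^ 2 + μ ^ 2) * -y r = 0
    linear_combination -h.ode r hr

theorem hasDerivAt_comp_exp (h : IsModBesselSolution μ y y' y'') (s t : ℝ) :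
    HasDerivAt (fun t => y (exp (s * t))) (s * exp (s * t) * y' (exp (s * t))) t := by
  have := (h.hasDerivAt _ (exp_pos (s * t))).comp t ((hasDerivAt_id t).const_mul s).exp
  exact this.congr_deriv (by simp only [id]; ring)

-- Euler's substitution `r = exp (s t)` turns `(r d/dr)² y = (r² + μ²) y` into `u'' = s² (r² + μ²) u`
theorem hasDerivAt_deriv_comp_exp (h : IsModBesselSolution μ y y' y'') (s t : ℝ) :
    HasDerivAt (fun t => s * exp (s * t) * y' (exp (s * t)))
      (s ^ 2 * (exp (s * t) ^ 2 + μ ^ 2) * y (exp (s * t))) t := by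
  have hE : HasDerivAt (fun t => exp (s * t)) (exp (s * t) * s) t := by
    simpa using ((hasDerivAt_id t).const_mul s).exp
  have := (hE.const_mul s).mul ((h.hasDerivAt_deriv _ (exp_pos (s * t))).comp t hE)
  refine this.congr_deriv ?_
  simp only [Function.comp_apply]
  linear_combination s ^ 2 * h.ode (exp (s * t)) (exp_pos _)

theorem exists_rpow_le_of_deriv_nonneg (h : IsModBesselSolution μ y y' y'') {r₀ : ℝ}
    (hr₀ : 0 < r₀) (hy : 0 < y r₀) (hy' : 0 ≤ y' r₀) (K : ℝ) :
    ∃ C > 0, ∃ R > 0, ∀ r > R, C * r ^ K ≤ y r := by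
  have hu := h.hasDerivAt_comp_exp 1
  have hv := h.hasDerivAt_deriv_comp_exp 1
  simp only [one_mul, one_pow] at hu hv
  set T := max (log r₀) |K|
  obtain ⟨huT, hvT⟩ := pos_and_nonneg_of_hasDerivAt hu hv (fun t _ => by positivity)
    (by rwa [exp_log hr₀]) (by rw [exp_log hr₀]; positivity) T (mem_Ici.2 (le_max_left _ _))
  have hgrow := half_mul_exp_le_of_hasDerivAt hu hv (k := K) (a := T) (fun t ht => ?_) huT hvT
  · refine ⟨y (exp T) / 2 * exp (-(K * T)), by positivity, exp T, exp_pos T, fun r hr => ?_⟩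
    have hr0 : 0 < r := (exp_pos T).trans hr
    have := hgrow (log r) ((lt_log_iff_exp_lt hr0).2 hr).le
    rwa [exp_log hr0, exp_mul_log_sub hr0, ← mul_assoc] at this
  · have hKt : |K| ≤ exp t := by
      linarith [le_max_right (log r₀) |K|, mem_Ici.1 ht, add_one_le_exp t]
    nlinarith [sq_abs K, abs_nonneg K]

theorem exists_rpow_neg_le_of_deriv_nonpos (h : IsModBesselSolution μ y y' y'') {r₀ : ℝ}
    (hr₀ : 0 < r₀) (hy : 0 < y r₀) (hy' : y' r₀ ≤ 0) :
    ∃ C > 0, ∀ r ∈ Ioo 0 r₀, C * r ^ (-μ) ≤ y r := by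
  have hu := h.hasDerivAt_comp_exp (-1)
  have hv := h.hasDerivAt_deriv_comp_exp (-1)
  simp only [neg_one_mul, neg_one_sq, one_mul] at hu hv
  have hgrow := half_mul_exp_le_of_hasDerivAt hu hv (k := μ) (a := -log r₀)
    (fun t _ => by nlinarith [sq_nonneg (exp (-t))]) (by rwa [neg_neg, exp_log hr₀])
    (by rw [neg_neg, exp_log hr₀]; nlinarith)
  refine ⟨y r₀ / 2 * exp (-(-μ * log r₀)), by positivity, fun r hr => ?_⟩
  have := hgrow (-log r) (neg_le_neg (log_le_log hr.1 hr.2.le))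
  rwa [neg_neg, exp_log hr₀, neg_neg, exp_log hr.1,
    show μ * (-log r - -log r₀) = -μ * (log r - log r₀) by ring, exp_mul_log_sub hr.1,
    ← mul_assoc] at this

theorem not_pos_of_integrableOn (h : IsModBesselSolution μ y y' y'') {δ : ℝ} (hμδ : 0 ≤ μ + δ)
    (hint : IntegrableOn (fun r => (r ^ (-δ) * y r) ^ 2 / r) (Ioi 0)) {r₀ : ℝ} (hr₀ : 0 < r₀) :
    ¬ 0 < y r₀ := by
  intro hy
  rcases le_total 0 (y' r₀) with hy' | hy'
  · obtain ⟨C, hC, R, hR, hle⟩ := h.exists_rpow_le_of_deriv_nonneg hr₀ hy hy' δ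
    have := integrableOn_rpow_of_mul_rpow_le measurableSet_Ioi (Ioi_subset_Ioi hR.le) hC hle
      (hint.mono_set (Ioi_subset_Ioi hR.le))
    rw [integrableOn_Ioi_rpow_iff hR] at this
    linarith
  · obtain ⟨C, hC, hle⟩ := h.exists_rpow_neg_le_of_deriv_nonpos hr₀ hy hy'
    have := integrableOn_rpow_of_mul_rpow_le measurableSet_Ioo Ioo_subset_Ioi_self hC hle
      (hint.mono_set Ioo_subset_Ioi_self)
    rw [intervalIntegral.integrableOn_Ioo_rpow_iff hr₀] at this
    linarith

theorem eq_zero_of_integrableOn (h : IsModBesselSolution μ y y' y'') {δ : ℝ} (hμδ : 0 ≤ μ + δ)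
    (hint : IntegrableOn (fun r => (r ^ (-δ) * y r) ^ 2 / r) (Ioi 0)) {r : ℝ} (hr : 0 < r) :
    y r = 0 := by
  have hint_neg : IntegrableOn (fun r => (r ^ (-δ) * (-y) r) ^ 2 / r) (Ioi 0) := by
    simpa only [Pi.neg_apply, mul_neg, neg_sq] using hint
  have hpos := h.not_pos_of_integrableOn hμδ hint hr
  have hneg := h.neg.not_pos_of_integrableOn hμδ hint_neg hr
  rw [Pi.neg_apply, neg_pos] at hneg
  linarith

end IsModBesselSolution

theorem isModBesselSolution_of_contDiffOn {μ : ℝ} {y : ℝ → ℝ} (hy : ContDiffOn ℝ 2 y (Ioi 0))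
    (hode : ∀ r ∈ Ioi (0 : ℝ),
      r ^ 2 * deriv (deriv y) r + r * deriv y r - (r ^ 2 + μ ^ 2) * y r = 0) :
    IsModBesselSolution μ y (deriv y) (deriv (deriv y)) where
  hasDerivAt r hr :=
    ((hy.differentiableOn (by norm_num)).differentiableAt (Ioi_mem_nhds hr)).hasDerivAt
  hasDerivAt_deriv r hr :=
    (((hy.deriv_of_isOpen isOpen_Ioi (m := 1) (by norm_num)).differentiableOn
      (by norm_num)).differentiableAt (Ioi_mem_nhds hr)).hasDerivAt
  ode := hode

/-- Any solution `y : (0,∞) → ℝ` of the modified Bessel equation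
`(r d/dr)² y − (r² + μ²) y = 0` (i.e. `r² y'' + r y' − (r² + μ²) y = 0`) satisfying
`∫₀^∞ |r^{−δ} y(r)|² dr/r < ∞` for some `δ > −2` is identically zero.
(As dictated by the application to eigenvalues `μ = √(μ̂ + 4) ≥ 2` on the cone, the
statement is taken with `μ ≥ 2`, so that `K_μ(r) ~ c r^{−μ}` as `r → 0` violates the
weight condition `δ > −2`, while `I_μ(r) ~ e^r/√(2πr)` grows at infinity.) -/
theorem stmt_15 (μ δ : ℝ) (hμ : 2 ≤ μ) (hδ : -2 < δ)
    (y : ℝ → ℝ) (hsm : ContDiffOn ℝ 2 y (Ioi 0))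
    (hode : ∀ r ∈ Ioi (0 : ℝ),
      r ^ 2 * deriv (deriv y) r + r * deriv y r - (r ^ 2 + μ ^ 2) * y r = 0)
    (hint : IntegrableOn (fun r => (r ^ (-δ) * y r) ^ 2 / r) (Ioi 0)) :
    ∀ r ∈ Ioi (0 : ℝ), y r = 0 := fun _ hr =>
  (isModBesselSolution_of_contDiffOn hsm hode).eq_zero_of_integrableOn (by linarith) hint hr
end
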